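/- Let A have RIC δ_{3s}, let x be s-sparse, x̂ be s-sparse, y = Ax + e. If T̃ = supp(x̂ + Aᵀ(y − A x̂), s) then ‖(x − x̃)_{T̃^c}‖ ≤ √2·δ_{3s}·‖x − x̂‖ + √(2(1+δ_{2s}))·‖e‖, where x̃ is any vector supported on T̃ (so (x̃)_{T̃^c} = 0 and (x − x̃)_{T̃^c} = x_{T̃^c}). -/

import Mathlib

/-- Euclidean norm of a finitely-indexed real vector. -/
noncomputable def eucNorm {ι : Type*} [Fintype ι] (v : ι → ℝ) : ℝ :=
  Real.sqrt (∑ i, v i ^ 2)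

/-- `v` is `k`-sparse: at most `k` nonzero entries. -/
def sparse {ι : Type*} [Fintype ι] (k : ℕ) (v : ι → ℝ) : Prop :=
  ∃ T : Finset ι, T.card ≤ k ∧ ∀ i ∉ T, v i = 0

/-- Restriction of a vector to an index set (zero outside the set). -/
def restrict {ι : Type*} [Fintype ι] [DecidableEq ι] (v : ι → ℝ) (S : Finset ι) : ι → ℝ :=
  fun i => if i ∈ S then v i else 0

/-- `δ` is a restricted isometry constant of order `k` for `A`. -/
def RIPwith {M N : ℕ} (A : Matrix (Fin M) (Fin N) ℝ) (k : ℕ) (δ : ℝ) : Prop :=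
  ∀ v : Fin N → ℝ, sparse k v →
    (1 - δ) * eucNorm v ^ 2 ≤ eucNorm (A.mulVec v) ^ 2 ∧
    eucNorm (A.mulVec v) ^ 2 ≤ (1 + δ) * eucNorm v ^ 2

/-!
Write `u = x̂ + Aᵀ(y - A x̂)` and `S` for the support of `x`. As `T̃` collects the `s` largest
entries of `u` and `|S \ T̃| ≤ |T̃ \ S|`, we get `‖u_{S \ T̃}‖ ≤ ‖u_{T̃ \ S}‖`; since `x` vanishes
on `T̃ \ S` this yields `‖x_{S \ T̃}‖ ≤ √2 ‖(x - u)_{S ∆ T̃}‖`. Finally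
`x - u = (I - AᵀA)(x - x̂) - Aᵀe`, and the restricted isometry property bounds the restriction to
`S ∆ T̃` of the first term by `δ_{3s} ‖x - x̂‖` (all supports involved lie in a set of size `3s`)
and of the second by `√(1 + δ_{2s}) ‖e‖`.
-/

open Matrix
open scoped symmDiff

lemma add_le_sqrt_two_mul_sqrt (a b : ℝ) : a + b ≤ √2 * √(a ^ 2 + b ^ 2) := by
  rw [← Real.sqrt_mul zero_le_two]
  exact Real.le_sqrt_of_sq_le (by nlinarith [sq_nonneg (a - b)])

lemma sum_le_sum_of_card_le_of_forall_le {ι : Type*} {A B : Finset ι} {f : ι → ℝ}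
    (hf : ∀ i, 0 ≤ f i) (hcard : A.card ≤ B.card) (hle : ∀ a ∈ A, ∀ b ∈ B, f a ≤ f b) :
    ∑ i ∈ A, f i ≤ ∑ i ∈ B, f i := by
  rcases B.eq_empty_or_nonempty with rfl | hB
  · simp [Finset.card_eq_zero.mp (Nat.le_zero.mp hcard)]
  obtain ⟨b₀, hb₀, hmin⟩ := B.exists_min_image f hB
  calc ∑ i ∈ A, f i ≤ A.card • f b₀ := Finset.sum_le_card_nsmul _ _ _ fun a ha => hle a ha b₀ hb₀
    _ ≤ B.card • f b₀ := nsmul_le_nsmul_left (hf b₀) hcard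
    _ ≤ ∑ i ∈ B, f i := Finset.card_nsmul_le_sum _ _ _ hmin

lemma card_union_union_symmDiff_le {ι : Type*} [DecidableEq ι] (S S' T : Finset ι) :
    (S ∪ S' ∪ S ∆ T).card ≤ S.card + S'.card + T.card := by
  have hsub : S ∪ S' ∪ S ∆ T ⊆ S ∪ S' ∪ T := by
    intro i
    simp only [Finset.mem_union, Finset.mem_symmDiff]
    tauto
  linarith [Finset.card_le_card hsub, Finset.card_union_le (S ∪ S') T, Finset.card_union_le S S']

section EuclideanNorm

variable {ι : Type*} [Fintype ι]

lemma eucNorm_nonneg (v : ι → ℝ) : 0 ≤ eucNorm v := Real.sqrt_nonneg _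

lemma eucNorm_sq (v : ι → ℝ) : eucNorm v ^ 2 = v ⬝ᵥ v := by
  rw [eucNorm, Real.sq_sqrt (by positivity)]
  simp only [dotProduct, sq]

lemma eucNorm_eq_zero {v : ι → ℝ} : eucNorm v = 0 ↔ v = 0 := by
  rw [← sq_eq_zero_iff, eucNorm_sq, dotProduct_self_eq_zero]

lemma eucNorm_neg (v : ι → ℝ) : eucNorm (-v) = eucNorm v := by
  simp only [eucNorm, Pi.neg_apply, neg_sq]

lemma eucNorm_smul (c : ℝ) (v : ι → ℝ) : eucNorm (c • v) = |c| * eucNorm v := by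
  simp only [eucNorm, Pi.smul_apply, smul_eq_mul, mul_pow, ← Finset.mul_sum]
  rw [Real.sqrt_mul (sq_nonneg c), Real.sqrt_sq_eq_abs]

lemma dotProduct_le_eucNorm_mul (v w : ι → ℝ) : v ⬝ᵥ w ≤ eucNorm v * eucNorm w :=
  Real.sum_mul_le_sqrt_mul_sqrt _ v w

lemma eucNorm_add_sq (v w : ι → ℝ) :
    eucNorm (v + w) ^ 2 = eucNorm v ^ 2 + 2 * (v ⬝ᵥ w) + eucNorm w ^ 2 := by
  simp only [eucNorm_sq, add_dotProduct, dotProduct_add, dotProduct_comm w v]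
  ring

lemma eucNorm_sub_sq (v w : ι → ℝ) :
    eucNorm (v - w) ^ 2 = eucNorm v ^ 2 - 2 * (v ⬝ᵥ w) + eucNorm w ^ 2 := by
  simp only [eucNorm_sq, sub_dotProduct, dotProduct_sub, dotProduct_comm w v]
  ring

lemma eucNorm_add_le (v w : ι → ℝ) : eucNorm (v + w) ≤ eucNorm v + eucNorm w := by
  rw [← pow_le_pow_iff_left₀ (eucNorm_nonneg _)
    (add_nonneg (eucNorm_nonneg v) (eucNorm_nonneg w)) two_ne_zero, eucNorm_add_sq]
  nlinarith [dotProduct_le_eucNorm_mul v w]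

lemma eucNorm_sub_le (v w : ι → ℝ) : eucNorm (v - w) ≤ eucNorm v + eucNorm w := by
  simpa only [sub_eq_add_neg, eucNorm_neg] using eucNorm_add_le v (-w)

variable [DecidableEq ι]

lemma restrict_sub (v w : ι → ℝ) (S : Finset ι) :
    restrict (v - w) S = restrict v S - restrict w S := by
  funext i
  by_cases hi : i ∈ S <;> simp [restrict, hi]

lemma eucNorm_restrict_sq (v : ι → ℝ) (S : Finset ι) :
    eucNorm (restrict v S) ^ 2 = ∑ i ∈ S, v i ^ 2 := by
  rw [eucNorm, Real.sq_sqrt (by positivity)]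
  simp [restrict, ite_pow, Finset.sum_ite_mem]

lemma restrict_sub_compl_eq_restrict_sdiff {x x' : ι → ℝ} {S T : Finset ι}
    (hx : ∀ i ∉ S, x i = 0) (hx' : ∀ i ∉ T, x' i = 0) :
    restrict (x - x') Tᶜ = restrict x (S \ T) := by
  funext i
  by_cases hiT : i ∈ T <;> by_cases hiS : i ∈ S <;> simp [restrict, hiT, hiS, hx, hx']

lemma eucNorm_restrict_union_sq (v : ι → ℝ) {S T : Finset ι} (h : Disjoint S T) :
    eucNorm (restrict v (S ∪ T)) ^ 2 = eucNorm (restrict v S) ^ 2 + eucNorm (restrict v T) ^ 2 := by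
  simp only [eucNorm_restrict_sq, Finset.sum_union h]

lemma restrict_dotProduct_self (g : ι → ℝ) (S : Finset ι) :
    restrict g S ⬝ᵥ g = eucNorm (restrict g S) ^ 2 := by
  rw [eucNorm_restrict_sq]
  simp [dotProduct, restrict, ite_mul, Finset.sum_ite_mem, sq]

lemma eucNorm_restrict_le_of_dotProduct_le {g : ι → ℝ} {S : Finset ι} {K : ℝ} (hK : 0 ≤ K)
    (h : restrict g S ⬝ᵥ g ≤ K * eucNorm (restrict g S)) : eucNorm (restrict g S) ≤ K := by
  rw [restrict_dotProduct_self] at h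
  nlinarith [eucNorm_nonneg (restrict g S)]

lemma eucNorm_restrict_sdiff_le_of_forall_abs_le {u : ι → ℝ} {S T : Finset ι}
    (hcard : S.card ≤ T.card) (hsel : ∀ i ∈ T, ∀ j ∉ T, |u j| ≤ |u i|) :
    eucNorm (restrict u (S \ T)) ≤ eucNorm (restrict u (T \ S)) := by
  rw [← pow_le_pow_iff_left₀ (eucNorm_nonneg _) (eucNorm_nonneg _) two_ne_zero,
    eucNorm_restrict_sq, eucNorm_restrict_sq]
  refine sum_le_sum_of_card_le_of_forall_le (fun i => sq_nonneg (u i))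
    (Finset.card_sdiff_le_card_sdiff_iff.mpr hcard) fun a ha b hb => ?_
  exact sq_le_sq.mpr (hsel b (Finset.mem_sdiff.mp hb).1 a (Finset.mem_sdiff.mp ha).2)

lemma eucNorm_restrict_sdiff_le_sqrt_two_mul {x u : ι → ℝ} {S T : Finset ι}
    (hx : ∀ i ∉ S, x i = 0) (hsel : eucNorm (restrict u (S \ T)) ≤ eucNorm (restrict u (T \ S))) :
    eucNorm (restrict x (S \ T)) ≤ √2 * eucNorm (restrict (x - u) (S ∆ T)) := by
  have hu : restrict u (T \ S) = -restrict (x - u) (T \ S) := by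
    funext i
    by_cases hi : i ∈ T \ S
    · simp [restrict, hi, hx i (Finset.mem_sdiff.mp hi).2]
    · simp [restrict, hi]
  calc eucNorm (restrict x (S \ T))
      ≤ eucNorm (restrict (x - u) (S \ T)) + eucNorm (restrict u (S \ T)) := by
        simpa [restrict_sub] using eucNorm_add_le (restrict (x - u) (S \ T)) (restrict u (S \ T))
    _ ≤ eucNorm (restrict (x - u) (S \ T)) + eucNorm (restrict (x - u) (T \ S)) := by
        rw [hu, eucNorm_neg] at hsel
        gcongr
    _ ≤ √2 * eucNorm (restrict (x - u) (S ∆ T)) := by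
        rw [Finset.symmDiff_def, ← Real.sqrt_sq (eucNorm_nonneg (restrict _ (_ ∪ _))),
          eucNorm_restrict_union_sq _ disjoint_sdiff_sdiff]
        exact add_le_sqrt_two_mul_sqrt _ _

end EuclideanNorm

namespace RIPwith

variable {M N : ℕ} {A : Matrix (Fin M) (Fin N) ℝ} {t : ℕ} {δ : ℝ}

lemma mul_eucNorm_nonneg (h : RIPwith A t δ) {v : Fin N → ℝ} (hv : sparse t v) :
    0 ≤ δ * eucNorm v := by
  obtain ⟨hlow, hup⟩ := h v hv
  rcases (eucNorm_nonneg v).eq_or_lt with h0 | hpos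
  · simp [← h0]
  · nlinarith

lemma eucNorm_mulVec_le (h : RIPwith A t δ) {v : Fin N → ℝ} (hv : sparse t v) :
    eucNorm (A *ᵥ v) ≤ √(1 + δ) * eucNorm v :=
  calc eucNorm (A *ᵥ v) = √(eucNorm (A *ᵥ v) ^ 2) := (Real.sqrt_sq (eucNorm_nonneg _)).symm
    _ ≤ √((1 + δ) * eucNorm v ^ 2) := Real.sqrt_le_sqrt (h v hv).2
    _ = √(1 + δ) * eucNorm v := by
        rw [Real.sqrt_mul' _ (sq_nonneg _), Real.sqrt_sq (eucNorm_nonneg _)]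

/-- Polarization: `4 (⟨Av, Aw⟩ - ⟨v, w⟩)` is the difference of the RIP defects of `v ± w`. -/
lemma abs_dotProduct_mulVec_sub_le_half (h : RIPwith A t δ) {U : Finset (Fin N)}
    (hU : U.card ≤ t) {v w : Fin N → ℝ} (hv : ∀ i ∉ U, v i = 0) (hw : ∀ i ∉ U, w i = 0) :
    |A *ᵥ v ⬝ᵥ A *ᵥ w - v ⬝ᵥ w| ≤ δ / 2 * (eucNorm v ^ 2 + eucNorm w ^ 2) := by
  have hadd := h (v + w) ⟨U, hU, fun i hi => by simp [hv i hi, hw i hi]⟩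
  have hsub := h (v - w) ⟨U, hU, fun i hi => by simp [hv i hi, hw i hi]⟩
  rw [mulVec_add, eucNorm_add_sq, eucNorm_add_sq] at hadd
  rw [mulVec_sub, eucNorm_sub_sq, eucNorm_sub_sq] at hsub
  rw [abs_le]
  constructor <;> nlinarith [hadd.1, hadd.2, hsub.1, hsub.2]

lemma abs_dotProduct_mulVec_sub_le (h : RIPwith A t δ) {U : Finset (Fin N)}
    (hU : U.card ≤ t) {v w : Fin N → ℝ} (hv : ∀ i ∉ U, v i = 0) (hw : ∀ i ∉ U, w i = 0) :
    |A *ᵥ v ⬝ᵥ A *ᵥ w - v ⬝ᵥ w| ≤ δ * eucNorm v * eucNorm w := by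
  set a := eucNorm v
  set b := eucNorm w
  rcases (eucNorm_nonneg v).eq_or_lt with ha | ha
  · simp [a, b, ← ha, eucNorm_eq_zero.mp ha.symm]
  rcases (eucNorm_nonneg w).eq_or_lt with hb | hb
  · simp [a, b, ← hb, eucNorm_eq_zero.mp hb.symm]
  have hscale : A *ᵥ (b • v) ⬝ᵥ A *ᵥ (a • w) - (b • v) ⬝ᵥ (a • w) =
      b * a * (A *ᵥ v ⬝ᵥ A *ᵥ w - v ⬝ᵥ w) := by
    simp only [mulVec_smul, smul_dotProduct, dotProduct_smul, smul_eq_mul]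
    ring
  have key := h.abs_dotProduct_mulVec_sub_le_half hU (v := b • v) (w := a • w)
    (fun i hi => by simp [hv i hi]) (fun i hi => by simp [hw i hi])
  rw [hscale, abs_mul, abs_of_pos (mul_pos hb ha), eucNorm_smul, eucNorm_smul, abs_of_pos ha,
    abs_of_pos hb] at key
  nlinarith [mul_pos ha hb]

lemma eucNorm_restrict_sub_transpose_mulVec_mulVec_le (h : RIPwith A t δ)
    {V Δ : Finset (Fin N)} (hcard : (V ∪ Δ).card ≤ t) {v : Fin N → ℝ} (hv : ∀ i ∉ V, v i = 0) :
    eucNorm (restrict (v - Aᵀ *ᵥ (A *ᵥ v)) Δ) ≤ δ * eucNorm v := by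
  have hvU : ∀ i ∉ V ∪ Δ, v i = 0 := fun i hi => hv i fun hV => hi (Finset.mem_union_left _ hV)
  set w := restrict (v - Aᵀ *ᵥ (A *ᵥ v)) Δ
  have hwU : ∀ i ∉ V ∪ Δ, w i = 0 := fun i hi => if_neg fun hΔ => hi (Finset.mem_union_right _ hΔ)
  refine eucNorm_restrict_le_of_dotProduct_le (h.mul_eucNorm_nonneg ⟨_, hcard, hvU⟩) ?_
  calc w ⬝ᵥ (v - Aᵀ *ᵥ (A *ᵥ v)) = -(A *ᵥ w ⬝ᵥ A *ᵥ v - w ⬝ᵥ v) := by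
        rw [dotProduct_sub, dotProduct_mulVec, vecMul_transpose]
        ring
    _ ≤ |A *ᵥ w ⬝ᵥ A *ᵥ v - w ⬝ᵥ v| := neg_le_abs _
    _ ≤ δ * eucNorm w * eucNorm v := h.abs_dotProduct_mulVec_sub_le hcard hwU hvU
    _ = δ * eucNorm v * eucNorm w := by ring

lemma eucNorm_restrict_transpose_mulVec_le (h : RIPwith A t δ) {Δ : Finset (Fin N)}
    (hΔ : Δ.card ≤ t) (e : Fin M → ℝ) :
    eucNorm (restrict (Aᵀ *ᵥ e) Δ) ≤ √(1 + δ) * eucNorm e := by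
  set w := restrict (Aᵀ *ᵥ e) Δ
  have hw : sparse t w := ⟨Δ, hΔ, fun i hi => if_neg hi⟩
  refine eucNorm_restrict_le_of_dotProduct_le (by positivity [eucNorm_nonneg e]) ?_
  calc w ⬝ᵥ (Aᵀ *ᵥ e) = A *ᵥ w ⬝ᵥ e := by rw [dotProduct_mulVec, vecMul_transpose]
    _ ≤ eucNorm (A *ᵥ w) * eucNorm e := dotProduct_le_eucNorm_mul _ _
    _ ≤ √(1 + δ) * eucNorm w * eucNorm e := by
        gcongr
        · exact eucNorm_nonneg e
        · exact h.eucNorm_mulVec_le hw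
    _ = √(1 + δ) * eucNorm e * eucNorm w := by ring

end RIPwith

/-- Hard-thresholding step bound (Foucart's HTP analysis): if `x, x̂` are `s`-sparse,
`y = A x + e`, and `T̃` is the set of the `s` largest-magnitude entries of
`x̂ + Aᵀ(y − A x̂)`, then for any `x̃` supported on `T̃`,
`‖(x − x̃)_{T̃ᶜ}‖ ≤ √2 δ_{3s} ‖x − x̂‖ + √(2(1+δ_{2s})) ‖e‖`. -/
theorem hard_thresholding_step_bound {M N : ℕ} (s : ℕ)
    (A : Matrix (Fin M) (Fin N) ℝ)
    (x xhat xtilde : Fin N → ℝ) (e y : Fin M → ℝ)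
    (hy : y = A.mulVec x + e)
    (hx : sparse s x) (hxhat : sparse s xhat)
    (δ₃ δ₂ : ℝ) (hδ₃ : RIPwith A (3 * s) δ₃) (hδ₂ : RIPwith A (2 * s) δ₂)
    (T : Finset (Fin N)) (hTcard : T.card = s)
    (hTsel : ∀ i ∈ T, ∀ j ∉ T,
      |(xhat + A.transpose.mulVec (y - A.mulVec xhat)) j| ≤
      |(xhat + A.transpose.mulVec (y - A.mulVec xhat)) i|)
    (hxt : ∀ i ∉ T, xtilde i = 0) :
    eucNorm (restrict (x - xtilde) Tᶜ) ≤
      Real.sqrt 2 * δ₃ * eucNorm (x - xhat) +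
      Real.sqrt (2 * (1 + δ₂)) * eucNorm e := by
  obtain ⟨S, hScard, hS⟩ := hx
  obtain ⟨Ŝ, hŜcard, hŜ⟩ := hxhat
  set u := xhat + Aᵀ *ᵥ (y - A *ᵥ xhat)
  have hxu : x - u = ((x - xhat) - Aᵀ *ᵥ (A *ᵥ (x - xhat))) - Aᵀ *ᵥ e := by
    simp only [u, hy, mulVec_sub, mulVec_add]
    abel
  have hdiff : ∀ i ∉ S ∪ Ŝ, (x - xhat) i = 0 := fun i hi => by
    simp_all [Finset.mem_union]
  have hcard₃ : (S ∪ Ŝ ∪ S ∆ T).card ≤ 3 * s :=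
    (card_union_union_symmDiff_le S Ŝ T).trans (by omega)
  have hcard₂ : (S ∆ T).card ≤ 2 * s :=
    (Finset.card_le_card Finset.symmDiff_subset_union).trans
      ((Finset.card_union_le S T).trans (by omega))
  have hres : eucNorm (restrict (x - u) (S ∆ T)) ≤
      δ₃ * eucNorm (x - xhat) + √(1 + δ₂) * eucNorm e := by
    rw [hxu, restrict_sub]
    exact (eucNorm_sub_le _ _).trans <| add_le_add
      (hδ₃.eucNorm_restrict_sub_transpose_mulVec_mulVec_le hcard₃ hdiff)
      (hδ₂.eucNorm_restrict_transpose_mulVec_le hcard₂ e)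
  calc eucNorm (restrict (x - xtilde) Tᶜ) = eucNorm (restrict x (S \ T)) := by
        rw [restrict_sub_compl_eq_restrict_sdiff hS hxt]
    _ ≤ √2 * eucNorm (restrict (x - u) (S ∆ T)) :=
        eucNorm_restrict_sdiff_le_sqrt_two_mul hS
          (eucNorm_restrict_sdiff_le_of_forall_abs_le (hScard.trans hTcard.ge) hTsel)
    _ ≤ √2 * (δ₃ * eucNorm (x - xhat) + √(1 + δ₂) * eucNorm e) := by gcongr
    _ = √2 * δ₃ * eucNorm (x - xhat) + √(2 * (1 + δ₂)) * eucNorm e := by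
        rw [Real.sqrt_mul zero_le_two]
        ring
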